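/- (High-probability guarantee for Catoni-type mean estimator) Let x₁,…,x_n be i.i.d. real random variables with E[x²] ≤ τ, and let x̂(s,β) = (s/n)·Σᵢ E_{ηᵢ~N(0,1/β)}[φ((xᵢ + ηᵢxᵢ)/s)] where φ is the Catoni truncation function. Then for any ζ ∈ (0,1), with probability at least 1 − 2ζ, |x̂(s,β) − E[x]| ≤ (τ/(2s))·(1/β + 1) + (s/n)·(β/2 + log(1/ζ)). -/

import Mathlib

open MeasureTheory ProbabilityTheory
open Real
open scoped NNReal ENNReal

set_option maxHeartbeats 1000000
set_option linter.unusedSectionVars false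

noncomputable def phi (x : ℝ) : ℝ :=
  if x < -Real.sqrt 2 then -(2 * Real.sqrt 2 / 3)
  else if x ≤ Real.sqrt 2 then x - x ^ 3 / 6
  else 2 * Real.sqrt 2 / 3

/-- The Catoni-type mean estimator with multiplicative Gaussian noise smoothing. -/
noncomputable def catoniEst (n : ℕ) (s : ℝ) (β : NNReal) (D : Fin n → ℝ) : ℝ :=
  (s / n) * ∑ i, ∫ η, phi ((D i + η * D i) / s) ∂(gaussianReal 0 β⁻¹)

lemma q_pos (u : ℝ) : 0 < 1 + u + u^2/2 := by nlinarith [sq_nonneg (u+1)]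

noncomputable def Fc (u : ℝ) : ℝ := Real.log (1 + u + u^2/2) - (u - u^3/6)

lemma Fc_deriv (u : ℝ) :
    HasDerivAt Fc ((1 + u)/(1 + u + u^2/2) - (1 - u^2/2)) u := by
  have hq : HasDerivAt (fun u : ℝ => 1 + u + u^2/2) (1 + u) u := by
    have h := ((hasDerivAt_const u (1:ℝ)).add (hasDerivAt_id u)).add
      ((hasDerivAt_pow 2 u).div_const 2)
    refine h.congr_deriv ?_
    push_cast
    ring
  have hlog := (Real.hasDerivAt_log (q_pos u).ne').comp u hq
  have hcub : HasDerivAt (fun u : ℝ => u - u^3/6) (1 - u^2/2) u := by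
    have h := (hasDerivAt_id u).sub ((hasDerivAt_pow 3 u).div_const 6)
    refine h.congr_deriv ?_
    push_cast
    ring
  have h2 := hlog.sub hcub
  refine h2.congr_deriv ?_
  field_simp

lemma Fc_cont : Continuous Fc := by
  apply Continuous.sub
  · exact continuous_iff_continuousAt.mpr fun u =>
      ContinuousAt.log (by fun_prop) (q_pos u).ne'
  · fun_prop

lemma Fc_nonneg {u : ℝ} (h1 : -Real.sqrt 2 ≤ u) (h2 : u ≤ Real.sqrt 2) : 0 ≤ Fc u := by
  have hs2 : (1:ℝ) ≤ Real.sqrt 2 := by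
    nlinarith [Real.sq_sqrt (by norm_num : (0:ℝ) ≤ 2), Real.sqrt_nonneg 2]
  have hs2' : Real.sqrt 2 < 1.415 := by
    nlinarith [Real.sq_sqrt (by norm_num : (0:ℝ) ≤ 2), Real.sqrt_nonneg 2]
  have hF0 : Fc 0 = 0 := by simp [Fc]
  rcases le_or_gt 0 u with hu | hu
  · have hmono : MonotoneOn Fc (Set.Icc 0 (Real.sqrt 2)) := by
      apply monotoneOn_of_deriv_nonneg (convex_Icc _ _) Fc_cont.continuousOn
      · exact fun x _ => (Fc_deriv x).differentiableAt.differentiableWithinAt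
      · intro x hx
        rw [interior_Icc] at hx
        rw [(Fc_deriv x).deriv, sub_nonneg, le_div_iff₀ (q_pos x)]
        nlinarith [hx.1.le, sq_nonneg x]
    have := hmono (Set.mem_Icc.mpr ⟨le_refl 0, by linarith⟩) (Set.mem_Icc.mpr ⟨hu, h2⟩) hu
    rwa [hF0] at this
  · have hanti : AntitoneOn Fc (Set.Icc (-Real.sqrt 2) 0) := by
      apply antitoneOn_of_deriv_nonpos (convex_Icc _ _) Fc_cont.continuousOn
      · exact fun x _ => (Fc_deriv x).differentiableAt.differentiableWithinAt
      · intro x hx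
        rw [interior_Icc] at hx
        rw [(Fc_deriv x).deriv, sub_nonpos, div_le_iff₀ (q_pos x)]
        have hx3 : x^3 ≤ 0 := Odd.pow_nonpos (by decide) hx.2.le
        nlinarith [hx.1, hx.2, sq_nonneg x, mul_nonneg (neg_nonneg.mpr hx3) (by nlinarith [hx.1] : (0:ℝ) ≤ 2 + x)]
    have := hanti (Set.mem_Icc.mpr ⟨h1, hu.le⟩) (Set.mem_Icc.mpr ⟨by linarith, le_refl 0⟩) hu.le
    rwa [hF0] at this



lemma sqrt2_bounds : (1.414:ℝ) < Real.sqrt 2 ∧ Real.sqrt 2 < 1.415 := by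
  constructor <;> nlinarith [Real.sq_sqrt (by norm_num : (0:ℝ) ≤ 2), Real.sqrt_nonneg 2]

lemma phi_neg (u : ℝ) : phi (-u) = -phi u := by
  obtain ⟨hl, hr⟩ := sqrt2_bounds
  unfold phi
  split_ifs <;> first | ring1 | (exfalso; linarith)

lemma phi_eq_clamp (x : ℝ) :
    phi x = (fun y => y - y^3/6) (max (-Real.sqrt 2) (min (Real.sqrt 2) x)) := by
  obtain ⟨hl, hr⟩ := sqrt2_bounds
  have h2 : Real.sqrt 2 ^ 2 = 2 := Real.sq_sqrt (by norm_num)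
  unfold phi
  split_ifs with h1 h3
  · rw [min_eq_right (by linarith), max_eq_left (by linarith)]
    simp only
    nlinarith
  · rw [min_eq_right h3, max_eq_right (by linarith)]
  · rw [min_eq_left (by linarith), max_eq_right (by linarith)]
    simp only
    nlinarith

lemma phi_continuous : Continuous phi := by
  have : phi = fun x => (fun y => y - y^3/6) (max (-Real.sqrt 2) (min (Real.sqrt 2) x)) :=
    funext phi_eq_clamp
  rw [this]
  fun_prop

lemma abs_phi_le_one (u : ℝ) : |phi u| ≤ 1 := by
  obtain ⟨hl, hr⟩ := sqrt2_bounds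
  have key : ∀ v : ℝ, -Real.sqrt 2 ≤ v → v ≤ Real.sqrt 2 → |v - v^3/6| ≤ 2 * Real.sqrt 2 / 3 := by
    intro v h1 h2
    rw [abs_le]
    constructor
    · nlinarith [Real.sq_sqrt (by norm_num : (0:ℝ) ≤ 2),
        mul_nonneg (sq_nonneg (v + Real.sqrt 2)) (by linarith : (0:ℝ) ≤ 2*Real.sqrt 2 - v)]
    · nlinarith [Real.sq_sqrt (by norm_num : (0:ℝ) ≤ 2),
        mul_nonneg (sq_nonneg (v - Real.sqrt 2)) (by linarith : (0:ℝ) ≤ v + 2*Real.sqrt 2)]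
  unfold phi
  split_ifs with h1 h2
  · rw [abs_neg, abs_of_nonneg (by positivity)]; linarith
  · exact le_trans (key u (by linarith) h2) (by linarith)
  · rw [abs_of_nonneg (by positivity)]; linarith


lemma Fc_nonneg' {u : ℝ} (h1 : -Real.sqrt 2 ≤ u) (h2 : u ≤ Real.sqrt 2) :
    0 ≤ Real.log (1 + u + u^2/2) - (u - u^3/6) := Fc_nonneg h1 h2

lemma exp_phi_le (u : ℝ) : Real.exp (phi u) ≤ 1 + u + u^2/2 := by
  obtain ⟨hl, hr⟩ := sqrt2_bounds
  have h2 : Real.sqrt 2 ^ 2 = 2 := Real.sq_sqrt (by norm_num)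
  unfold phi
  split_ifs with h1 h3
  · -- u < -√2 : exp(-(2√2/3)) ≤ 1/2 ≤ q u
    have key : Real.exp (-(2 * Real.sqrt 2 / 3)) ≤ 1/2 := by
      rw [Real.exp_neg, inv_le_comm₀ (Real.exp_pos _) (by norm_num)]
      have h4 : (1 + Real.sqrt 2 / 3) ^ 2 ≤ Real.exp (2 * Real.sqrt 2 / 3) := by
        have := Real.add_one_le_exp (Real.sqrt 2 / 3)
        calc (1 + Real.sqrt 2 / 3) ^ 2 ≤ Real.exp (Real.sqrt 2 / 3) ^ 2 := by
              apply pow_le_pow_left₀ (by positivity) (by linarith)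
          _ = Real.exp (2 * Real.sqrt 2 / 3) := by
              rw [← Real.exp_nat_mul]; ring_nf
      nlinarith
    nlinarith [q_pos u, sq_nonneg (u+1)]
  · -- middle
    have hF := Fc_nonneg' (by linarith) h3
    have : u - u^3/6 ≤ Real.log (1 + u + u^2/2) := by linarith
    calc Real.exp (u - u^3/6) ≤ Real.exp (Real.log (1 + u + u^2/2)) := Real.exp_le_exp.mpr this
      _ = 1 + u + u^2/2 := Real.exp_log (q_pos u)
  · -- u > √2 : exp(2√2/3) ≤ e ≤ 2.719 ≤ 1 + √2 + 1 ≤ q u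
    have e1 : Real.exp (2 * Real.sqrt 2 / 3) ≤ Real.exp 1 := Real.exp_le_exp.mpr (by linarith)
    have e2 : Real.exp 1 < 2.7182818286 := Real.exp_one_lt_d9
    have hq : 2 + Real.sqrt 2 ≤ 1 + u + u^2/2 := by nlinarith
    linarith

lemma exp_neg_phi_le (u : ℝ) : Real.exp (-phi u) ≤ 1 - u + u^2/2 := by
  have := exp_phi_le (-u)
  rw [phi_neg] at this
  calc Real.exp (-phi u) ≤ 1 + -u + (-u)^2/2 := this
    _ = 1 - u + u^2/2 := by ring


lemma gauss_integral_eq (v : ℝ≥0) (hv : v ≠ 0) (g : ℝ → ℝ) :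
    ∫ x, g x ∂(gaussianReal 0 v) = ∫ x, gaussianPDFReal 0 v x * g x := by
  rw [gaussianReal_of_var_ne_zero _ hv]
  rw [show (volume.withDensity (gaussianPDF 0 v)) = volume.withDensity
      (fun x => ((fun x => (gaussianPDFReal 0 v x).toNNReal) x : ℝ≥0∞)) from rfl]
  rw [integral_withDensity_eq_integral_smul
    ((measurable_gaussianPDFReal 0 v).real_toNNReal) g]
  congr 1; ext x
  simp [NNReal.smul_def, Real.coe_toNNReal _ (gaussianPDFReal_nonneg _ _ _)]

lemma gauss_integrable_iff (v : ℝ≥0) (hv : v ≠ 0) (g : ℝ → ℝ) :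
    Integrable g (gaussianReal 0 v) ↔
      Integrable (fun x => gaussianPDFReal 0 v x * g x) volume := by
  rw [gaussianReal_of_var_ne_zero _ hv]
  rw [show (volume.withDensity (gaussianPDF 0 v)) = volume.withDensity
      (fun x => ((fun x => (gaussianPDFReal 0 v x).toNNReal) x : ℝ≥0∞)) from rfl]
  rw [integrable_withDensity_iff_integrable_smul
    ((measurable_gaussianPDFReal 0 v).real_toNNReal)]
  apply integrable_congr
  filter_upwards with x
  simp [NNReal.smul_def, Real.coe_toNNReal _ (gaussianPDFReal_nonneg _ _ _)]


section moments
variable {v : ℝ≥0} (hv : v ≠ 0)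

lemma hb_pos (hv : v ≠ 0) : 0 < ((2:ℝ) * v)⁻¹ := by
  have : 0 < (v:ℝ) := by positivity
  positivity

lemma pdf_eq (x : ℝ) : gaussianPDFReal 0 v x =
    (Real.sqrt (2 * π * v))⁻¹ * Real.exp (-((2:ℝ)*v)⁻¹ * x^2) := by
  unfold gaussianPDFReal
  congr 1
  rw [sub_zero]
  ring_nf

include hv

lemma gauss_m1 : ∫ x : ℝ, gaussianPDFReal 0 v x * x = 0 := by
  set f : ℝ → ℝ := fun x => gaussianPDFReal 0 v x * x with hf
  have hodd : ∀ x, f (-x) = -f x := by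
    intro x
    simp only [hf, gaussianPDFReal]
    ring_nf
  have hmp : MeasurePreserving (fun x : ℝ => -x) volume volume :=
    Measure.measurePreserving_neg _
  have hcomp : ∫ x, f (-x) = ∫ x, f x :=
    hmp.integral_comp (Homeomorph.neg ℝ).measurableEmbedding f
  have : ∫ x, f (-x) = -∫ x, f x := by
    simp_rw [hodd]
    exact integral_neg f
  linarith [hcomp.symm.trans this]

lemma integral_sq_exp {b : ℝ} (hb : 0 < b) :
    ∫ x : ℝ, x^2 * Real.exp (-b * x^2) = Real.sqrt (π / b) / (2*b) := by
  have h1 : ∫ x : ℝ, x^2 * Real.exp (-b * x^2)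
      = 2 * ∫ x in Set.Ioi (0:ℝ), x^2 * Real.exp (-b * x^2) := by
    rw [← integral_comp_abs (f := fun x => x^2 * Real.exp (-b * x^2))]
    congr 1
    ext x
    rw [sq_abs]
  have h2 : ∫ x in Set.Ioi (0:ℝ), x^2 * Real.exp (-b * x^2)
      = b ^ (-((2:ℝ) + 1) / 2) * (1 / 2) * Real.Gamma (((2:ℝ) + 1) / 2) := by
    rw [← integral_rpow_mul_exp_neg_mul_rpow (by norm_num) (by norm_num) hb]
    apply setIntegral_congr_fun measurableSet_Ioi
    intro x hx
    simp only [show ((2:ℝ)) = ((2:ℕ):ℝ) by norm_num, Real.rpow_natCast]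
  have hG : Real.Gamma (((2:ℝ) + 1) / 2) = Real.sqrt π / 2 := by
    rw [show ((2:ℝ) + 1)/2 = 1/2 + 1 by norm_num, Real.Gamma_add_one (by norm_num),
      Real.Gamma_one_half_eq]
    ring
  rw [h1, h2, hG]
  have hsb : Real.sqrt b > 0 := Real.sqrt_pos.mpr hb
  have hsb2 : Real.sqrt b ^ 2 = b := Real.sq_sqrt hb.le
  rw [show (-((2:ℝ) + 1) / 2) = (-1) + (-1/2) by norm_num, Real.rpow_add hb,
    Real.rpow_neg_one, show (-1/2 : ℝ) = -(1/2) by norm_num, Real.rpow_neg hb.le,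
    ← Real.sqrt_eq_rpow, Real.sqrt_div Real.pi_pos.le]
  field_simp

end moments

section more
variable {v : ℝ≥0} (hv : v ≠ 0)
include hv

lemma gauss_m2 : ∫ x : ℝ, gaussianPDFReal 0 v x * x^2 = v := by
  have hb := hb_pos hv
  have hv' : (0:ℝ) < v := by positivity
  have h1 : ∀ x : ℝ, gaussianPDFReal 0 v x * x^2
      = (Real.sqrt (2 * π * v))⁻¹ * (x^2 * Real.exp (-((2:ℝ)*v)⁻¹ * x^2)) := by
    intro x; rw [pdf_eq]; ring
  simp_rw [h1]
  rw [integral_const_mul, integral_sq_exp hv hb]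
  rw [show π / ((2:ℝ)*v)⁻¹ = 2 * π * v by field_simp]
  have hsq : Real.sqrt (2 * π * v) > 0 := Real.sqrt_pos.mpr (by positivity)
  field_simp

lemma gauss_i1 : Integrable (fun x : ℝ => gaussianPDFReal 0 v x * x) volume := by
  apply Integrable.congr
    (((integrable_mul_exp_neg_mul_sq (hb_pos hv)).const_mul ((Real.sqrt (2 * π * v))⁻¹)))
  filter_upwards with x
  rw [pdf_eq]
  ring

lemma gauss_i2 : Integrable (fun x : ℝ => gaussianPDFReal 0 v x * x^2) volume := by
  have h := (integrable_rpow_mul_exp_neg_mul_sq (hb_pos hv)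
    (s := ((2:ℕ):ℝ)) (by norm_num)).const_mul ((Real.sqrt (2 * π * v))⁻¹)
  simp only [Real.rpow_natCast] at h
  apply h.congr
  filter_upwards with x
  rw [pdf_eq]
  ring

lemma gauss_quad_integrable (a b c : ℝ) :
    Integrable (fun x => a + b*x + c*x^2) (gaussianReal 0 v) := by
  rw [gauss_integrable_iff v hv]
  have h : ∀ x : ℝ, gaussianPDFReal 0 v x * (a + b*x + c*x^2)
      = a * gaussianPDFReal 0 v x + b * (gaussianPDFReal 0 v x * x)
        + c * (gaussianPDFReal 0 v x * x^2) := by intro x; ring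
  simp_rw [h]
  exact (((integrable_gaussianPDFReal 0 v).const_mul a).add
    ((gauss_i1 hv).const_mul b)).add ((gauss_i2 hv).const_mul c)

lemma gauss_quad_integral (a b c : ℝ) :
    ∫ x, (a + b*x + c*x^2) ∂(gaussianReal 0 v) = a + c*v := by
  rw [gauss_integral_eq v hv]
  have h : ∀ x : ℝ, gaussianPDFReal 0 v x * (a + b*x + c*x^2)
      = a * gaussianPDFReal 0 v x + b * (gaussianPDFReal 0 v x * x)
        + c * (gaussianPDFReal 0 v x * x^2) := by intro x; ring
  simp_rw [h]
  have I1 : Integrable (fun x => a * gaussianPDFReal 0 v x) volume :=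
    (integrable_gaussianPDFReal 0 v).const_mul a
  have I2 : Integrable (fun x => b * (gaussianPDFReal 0 v x * x)) volume :=
    (gauss_i1 hv).const_mul b
  have I3 : Integrable (fun x => c * (gaussianPDFReal 0 v x * x^2)) volume :=
    (gauss_i2 hv).const_mul c
  have IA : Integrable (fun x => a * gaussianPDFReal 0 v x
      + b * (gaussianPDFReal 0 v x * x)) volume := I1.add I2
  rw [integral_add IA I3, integral_add I1 I2,
    integral_const_mul, integral_const_mul, integral_const_mul,
    integral_gaussianPDFReal_eq_one 0 hv, gauss_m1 hv, gauss_m2 hv]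
  ring
end more



noncomputable def gfun (s : ℝ) (v : ℝ≥0) (x : ℝ) : ℝ :=
  ∫ η, phi ((x + η * x) / s) ∂(gaussianReal 0 v)

section gfun
variable {s : ℝ} {v : ℝ≥0} (hv : v ≠ 0)

lemma inner_cont (x : ℝ) : Continuous (fun η : ℝ => phi ((x + η * x) / s)) :=
  phi_continuous.comp (by fun_prop)

lemma inner_integrable (x : ℝ) :
    Integrable (fun η : ℝ => phi ((x + η * x) / s)) (gaussianReal 0 v) := by
  apply (integrable_const (1:ℝ)).mono' (inner_cont x).aestronglyMeasurable
  filter_upwards with η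
  rw [Real.norm_eq_abs]
  exact abs_phi_le_one _

lemma abs_gfun_le_one (x : ℝ) : |gfun s v x| ≤ 1 := by
  have h := norm_integral_le_of_norm_le_const (μ := gaussianReal 0 v)
    (f := fun η : ℝ => phi ((x + η * x) / s)) (C := 1) ?_
  · simpa [gfun] using h
  · filter_upwards with η
    rw [Real.norm_eq_abs]
    exact abs_phi_le_one _

lemma gfun_continuous : Continuous (gfun s v) := by
  apply continuous_of_dominated (bound := fun _ : ℝ => (1:ℝ))
    (F := fun x η => phi ((x + η * x) / s))
  · exact fun x => (inner_cont x).aestronglyMeasurable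
  · intro x
    filter_upwards with η
    rw [Real.norm_eq_abs]
    exact abs_phi_le_one _
  · exact integrable_const 1
  · filter_upwards with η
    exact phi_continuous.comp (by fun_prop)

include hv in
lemma exp_gfun_le (hs : 0 < s) {σ : ℝ} (hσ : σ = 1 ∨ σ = -1) (x : ℝ) :
    Real.exp (σ * gfun s v x) ≤ 1 + σ*(x/s) + (x/s)^2*(1+(v:ℝ))/2 := by
  set γ := gaussianReal 0 v
  set f : ℝ → ℝ := fun η => σ * phi ((x + η * x) / s) with hfdef
  have hσ1 : |σ| = 1 := by rcases hσ with h | h <;> rw [h] <;> norm_num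
  have hm : σ * gfun s v x = ∫ η, f η ∂γ := by
    rw [gfun, ← integral_const_mul]
  set m := σ * gfun s v x with hmdef
  have hfi : Integrable f γ := (inner_integrable x).const_mul σ
  have hexpf_i : Integrable (fun η => Real.exp (f η)) γ := by
    apply (integrable_const (Real.exp 1)).mono'
      (Real.continuous_exp.comp (continuous_const.mul (inner_cont x))).aestronglyMeasurable
    filter_upwards with η
    simp only [Function.comp_apply]
    rw [Real.norm_eq_abs, Real.abs_exp, Real.exp_le_exp]
    calc f η ≤ |f η| := le_abs_self _
      _ ≤ 1 := by
        rw [hfdef]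
        simp only [abs_mul, hσ1, one_mul]
        exact abs_phi_le_one _
  -- Jensen via tangent line
  have step1 : Real.exp m ≤ ∫ η, Real.exp (f η) ∂γ := by
    have hpt : ∀ η, Real.exp m * (1 + (f η - m)) ≤ Real.exp (f η) := by
      intro η
      have h1 : (f η - m) + 1 ≤ Real.exp (f η - m) := Real.add_one_le_exp _
      have h2 := mul_le_mul_of_nonneg_left h1 (Real.exp_pos m).le
      calc Real.exp m * (1 + (f η - m)) = Real.exp m * ((f η - m) + 1) := by ring
        _ ≤ Real.exp m * Real.exp (f η - m) := h2
        _ = Real.exp (f η) := by rw [← Real.exp_add]; ring_nf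
    have hint : Integrable (fun η => Real.exp m * (1 + (f η - m))) γ := by
      apply Integrable.const_mul
      exact (integrable_const 1).add (hfi.sub (integrable_const m))
    have := integral_mono hint hexpf_i hpt
    have hint1 : Integrable (fun η => f η - m) γ := hfi.sub (integrable_const m)
    calc Real.exp m = ∫ η, Real.exp m * (1 + (f η - m)) ∂γ := by
          rw [integral_const_mul, integral_add (integrable_const 1) hint1,
            integral_sub hfi (integrable_const m), integral_const, integral_const]
          simp [← hm]
      _ ≤ _ := this
  have step2 : ∫ η, Real.exp (f η) ∂γ
      ≤ ∫ η, (1 + σ*((x + η*x)/s) + ((x + η*x)/s)^2/2) ∂γ := by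
    have hq : Integrable (fun η => 1 + σ*((x + η*x)/s) + ((x + η*x)/s)^2/2) γ := by
      have := gauss_quad_integrable hv (1 + σ*(x/s) + (x/s)^2/2)
        (σ*(x/s) + (x/s)^2) ((x/s)^2/2)
      apply this.congr
      filter_upwards with η
      field_simp
      ring
    apply integral_mono hexpf_i hq
    intro η
    rcases hσ with h | h <;> rw [hfdef] <;> simp only [h]
    · simpa using exp_phi_le ((x + η*x)/s)
    · have := exp_neg_phi_le ((x + η*x)/s)
      calc Real.exp (-1 * phi ((x + η*x)/s)) = Real.exp (-(phi ((x + η*x)/s))) := by ring_nf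
        _ ≤ 1 - (x + η*x)/s + ((x + η*x)/s)^2/2 := this
        _ = 1 + (-1)*((x + η*x)/s) + ((x + η*x)/s)^2/2 := by ring
  have step3 : ∫ η, (1 + σ*((x + η*x)/s) + ((x + η*x)/s)^2/2) ∂γ
      = 1 + σ*(x/s) + (x/s)^2*(1+(v:ℝ))/2 := by
    have hrw : (fun η : ℝ => 1 + σ*((x + η*x)/s) + ((x + η*x)/s)^2/2)
        = fun η : ℝ => (1 + σ*(x/s) + (x/s)^2/2) + (σ*(x/s) + (x/s)^2)*η
          + ((x/s)^2/2)*η^2 := by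
      funext η
      field_simp
      ring
    rw [hrw, gauss_quad_integral hv]
    ring
  rw [hmdef] at step1
  linarith
end gfun




section main
variable {s τ : ℝ} {v : ℝ≥0} (hv : v ≠ 0) (hs : 0 < s)
  {μ : Measure ℝ} [IsProbabilityMeasure μ]
  (hX1 : Integrable (fun x => x) μ) (hX2 : Integrable (fun x => x ^ 2) μ)
  (hτ : (∫ x, x ^ 2 ∂μ) ≤ τ)

lemma exp_gfun_integrable {σ : ℝ} (hσ : σ = 1 ∨ σ = -1) :
    Integrable (fun x => Real.exp (σ * gfun s v x)) μ := by
  have hσ1 : |σ| = 1 := by rcases hσ with h | h <;> rw [h] <;> norm_num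
  apply (integrable_const (Real.exp 1)).mono'
    (Real.continuous_exp.comp (continuous_const.mul gfun_continuous)).aestronglyMeasurable
  filter_upwards with x
  simp only [Function.comp_apply]
  rw [Real.norm_eq_abs, Real.abs_exp, Real.exp_le_exp]
  calc σ * gfun s v x ≤ |σ * gfun s v x| := le_abs_self _
    _ ≤ 1 := by rw [abs_mul, hσ1, one_mul]; exact abs_gfun_le_one x

include hv hs hX1 hX2 hτ in
lemma mgf_one {σ : ℝ} (hσ : σ = 1 ∨ σ = -1) :
    ∫ x, Real.exp (σ * gfun s v x) ∂μ
      ≤ Real.exp ((σ/s) * (∫ x, x ∂μ) + (1+(v:ℝ))/(2*s^2) * τ) := by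
  set c : ℝ := (1+(v:ℝ))/(2*s^2) with hc
  have hc0 : 0 ≤ c := by positivity
  have hQ1 : Integrable (fun x => 1 + (σ/s)*x + c*x^2) μ := by
    exact ((integrable_const (1:ℝ)).add (hX1.const_mul (σ/s))).add (hX2.const_mul c)
  have hI2 : Integrable (fun x => (σ/s)*x) μ := hX1.const_mul (σ/s)
  have hI3 : Integrable (fun x => c*x^2) μ := hX2.const_mul c
  have hIA : Integrable (fun x => 1 + (σ/s)*x) μ := (integrable_const (1:ℝ)).add hI2
  have step1 : ∫ x, Real.exp (σ * gfun s v x) ∂μ ≤ ∫ x, (1 + (σ/s)*x + c*x^2) ∂μ := by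
    apply integral_mono (exp_gfun_integrable hσ) hQ1
    intro x
    calc Real.exp (σ * gfun s v x) ≤ 1 + σ*(x/s) + (x/s)^2*(1+(v:ℝ))/2 :=
          exp_gfun_le hv hs hσ x
      _ = 1 + (σ/s)*x + c*x^2 := by rw [hc]; field_simp
  have step2 : ∫ x, (1 + (σ/s)*x + c*x^2) ∂μ = 1 + (σ/s) * (∫ x, x ∂μ) + c * ∫ x, x^2 ∂μ := by
    rw [integral_add hIA hI3, integral_add (integrable_const 1) hI2,
      integral_const_mul, integral_const_mul, integral_const]
    simp
  have step3 : (1:ℝ) + (σ/s) * (∫ x, x ∂μ) + c * ∫ x, x^2 ∂μ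
      ≤ 1 + ((σ/s) * (∫ x, x ∂μ) + c * τ) := by
    have := mul_le_mul_of_nonneg_left hτ hc0
    linarith
  have step4 : (1:ℝ) + ((σ/s) * (∫ x, x ∂μ) + c * τ)
      ≤ Real.exp ((σ/s) * (∫ x, x ∂μ) + c * τ) := by
    have := Real.add_one_le_exp ((σ/s) * (∫ x, x ∂μ) + c * τ)
    linarith
  linarith

lemma prod_exp (n : ℕ) (σ : ℝ) :
    ∫ D, Real.exp (σ * ∑ i, gfun s v (D i)) ∂(Measure.pi fun _ : Fin n => μ)
      = (∫ x, Real.exp (σ * gfun s v x) ∂μ)^n := by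
  have h := integral_fintype_prod_eq_pow (ι := Fin n)
    (fun x => Real.exp (σ * gfun s v x)) (μ := μ)
  simp only [Fintype.card_fin] at h
  calc ∫ D, Real.exp (σ * ∑ i, gfun s v (D i)) ∂(Measure.pi fun _ : Fin n => μ)
      = ∫ D, ∏ i, Real.exp (σ * gfun s v (D i)) ∂(Measure.pi fun _ : Fin n => μ) := by
        congr 1
        funext D
        rw [Finset.mul_sum, Real.exp_sum]
    _ = (∫ x, Real.exp (σ * gfun s v x) ∂μ)^n := h
end main

section tail
variable {s τ ζ : ℝ} {v : ℝ≥0} {n : ℕ}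
  {μ : Measure ℝ} [IsProbabilityMeasure μ]

lemma tail_bound (hv : v ≠ 0) (hs : 0 < s) (hζ0 : 0 < ζ)
    (hX1 : Integrable (fun x => x) μ) (hX2 : Integrable (fun x => x ^ 2) μ)
    (hτ : (∫ x, x ^ 2 ∂μ) ≤ τ) {σ : ℝ} (hσ : σ = 1 ∨ σ = -1) :
    (Measure.pi fun _ : Fin n => μ)
      {D | (n:ℝ)*((σ/s) * (∫ x, x ∂μ) + (1+(v:ℝ))/(2*s^2) * τ) + Real.log (1/ζ)
        ≤ σ * ∑ i, gfun s v (D i)} ≤ ENNReal.ofReal ζ := by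
  set P := Measure.pi fun _ : Fin n => μ with hP
  have hPprob : IsProbabilityMeasure P := by rw [hP]; infer_instance
  set b : ℝ := (σ/s) * (∫ x, x ∂μ) + (1+(v:ℝ))/(2*s^2) * τ with hb
  set a : ℝ := (n:ℝ) * b + Real.log (1/ζ) with ha
  set T : (Fin n → ℝ) → ℝ := fun D => σ * ∑ i, gfun s v (D i) with hT
  have hσ1 : |σ| = 1 := by rcases hσ with h | h <;> rw [h] <;> norm_num
  have hTcont : Continuous T := by
    apply continuous_const.mul
    exact continuous_finset_sum _ (fun i _ => gfun_continuous.comp (continuous_apply i))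
  have hTbdd : ∀ D, T D ≤ n := by
    intro D
    rw [hT]
    calc σ * ∑ i, gfun s v (D i) ≤ |σ * ∑ i, gfun s v (D i)| := le_abs_self _
      _ = |∑ i, gfun s v (D i)| := by rw [abs_mul, hσ1, one_mul]
      _ ≤ ∑ i : Fin n, |gfun s v (D i)| := Finset.abs_sum_le_sum_abs _ _
      _ ≤ ∑ i : Fin n, 1 := Finset.sum_le_sum (fun i _ => abs_gfun_le_one _)
      _ = n := by simp
  have hTi : Integrable (fun D => Real.exp (T D)) P := by
    apply (integrable_const (Real.exp n)).mono'
      (Real.continuous_exp.comp hTcont).aestronglyMeasurable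
    filter_upwards with D
    simp only [Function.comp_apply]
    rw [Real.norm_eq_abs, Real.abs_exp, Real.exp_le_exp]
    exact hTbdd D
  have hset : {D | a ≤ T D} = {D | Real.exp a ≤ Real.exp (T D)} := by
    ext D; simp [Real.exp_le_exp]
  have hmarkov := mul_meas_ge_le_integral_of_nonneg
    (ae_of_all P (fun D => (Real.exp_pos (T D)).le)) hTi (Real.exp a)
  have hprod : ∫ D, Real.exp (T D) ∂P = (∫ x, Real.exp (σ * gfun s v x) ∂μ)^n := prod_exp n σ
  have hpow : (∫ x, Real.exp (σ * gfun s v x) ∂μ)^n ≤ Real.exp ((n:ℝ) * b) := by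
    rw [show Real.exp ((n:ℝ) * b) = Real.exp b ^ n by rw [← Real.exp_nat_mul]]
    exact pow_le_pow_left₀ (integral_nonneg (fun x => (Real.exp_pos _).le))
      (mgf_one hv hs hX1 hX2 hτ hσ) n
  have hkey : Real.exp a * (P {D | a ≤ T D}).toReal ≤ Real.exp ((n:ℝ) * b) := by
    rw [hset]
    calc Real.exp a * (P {D | Real.exp a ≤ Real.exp (T D)}).toReal
        ≤ ∫ D, Real.exp (T D) ∂P := hmarkov
      _ = _ := hprod
      _ ≤ _ := hpow
  have htoReal : (P {D | a ≤ T D}).toReal ≤ ζ := by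
    have h1 : (P {D | a ≤ T D}).toReal ≤ Real.exp ((n:ℝ) * b) / Real.exp a := by
      rw [le_div_iff₀ (Real.exp_pos a)]
      linarith [hkey]
    have h2 : Real.exp ((n:ℝ) * b) / Real.exp a = ζ := by
      rw [← Real.exp_sub, ha]
      have : (n:ℝ) * b - ((n:ℝ) * b + Real.log (1/ζ)) = - Real.log (1/ζ) := by ring
      rw [this, one_div, Real.log_inv, neg_neg, Real.exp_log hζ0]
    linarith
  calc P {D | a ≤ T D} = ENNReal.ofReal ((P {D | a ≤ T D}).toReal) :=
        (ENNReal.ofReal_toReal (measure_ne_top P _)).symm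
    _ ≤ ENNReal.ofReal ζ := ENNReal.ofReal_le_ofReal htoReal
end tail

theorem catoni_main (n : ℕ) (hn : 0 < n) (s τ ζ : ℝ) (β : NNReal)
    (hs : 0 < s) (hβ : 0 < β) (hζ0 : 0 < ζ) (hζ1 : ζ < 1)
    (μ : Measure ℝ) [IsProbabilityMeasure μ]
    (hX1 : Integrable (fun x => x) μ)
    (hX2 : Integrable (fun x => x ^ 2) μ)
    (hτ : (∫ x, x ^ 2 ∂μ) ≤ τ) :
    ENNReal.ofReal (1 - 2 * ζ) ≤
      (Measure.pi fun _ : Fin n => μ)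
        {D | |(fun D => (s / n) * ∑ i, gfun s β⁻¹ (D i)) D - ∫ x, x ∂μ| ≤
          τ / (2 * s) * (1 / (β : ℝ) + 1) + s / n * ((β : ℝ) / 2 + Real.log (1 / ζ))} := by
  set v : ℝ≥0 := β⁻¹ with hvdef
  have hv : v ≠ 0 := by
    rw [hvdef]
    exact inv_ne_zero hβ.ne'
  set m : ℝ := ∫ x, x ∂μ with hm
  set c : ℝ := (1+(v:ℝ))/(2*s^2) with hc
  set L : ℝ := Real.log (1/ζ) with hL
  set P := Measure.pi fun _ : Fin n => μ with hP
  have hPprob : IsProbabilityMeasure P := by rw [hP]; infer_instance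
  set R : ℝ := τ / (2 * s) * (1 / (β : ℝ) + 1) + s / n * ((β : ℝ) / 2 + L) with hR
  set Ap := {D : Fin n → ℝ | (n:ℝ)*(((1:ℝ)/s) * m + c * τ) + L
      ≤ (1:ℝ) * ∑ i, gfun s v (D i)} with hAp
  set Am := {D : Fin n → ℝ | (n:ℝ)*(((-1:ℝ)/s) * m + c * τ) + L
      ≤ (-1:ℝ) * ∑ i, gfun s v (D i)} with hAm
  have hA1 : P Ap ≤ ENNReal.ofReal ζ := tail_bound hv hs hζ0 hX1 hX2 hτ (Or.inl rfl)
  have hA2 : P Am ≤ ENNReal.ofReal ζ := tail_bound hv hs hζ0 hX1 hX2 hτ (Or.inr rfl)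
  have hτ0 : 0 ≤ τ := le_trans (integral_nonneg (fun x => sq_nonneg x)) hτ
  have hn' : (0:ℝ) < n := Nat.cast_pos.mpr hn
  have hvβ : (v:ℝ) = 1/(β:ℝ) := by rw [hvdef, NNReal.coe_inv, one_div]
  have hβ0 : (0:ℝ) < β := hβ
  -- the good event
  set S := {D : Fin n → ℝ | |(s / n) * ∑ i, gfun s v (D i) - m| ≤ R} with hS
  have hBR : s * c * τ + (s/n) * L ≤ R := by
    have h1 : s * c * τ = τ / (2 * s) * (1 / (β : ℝ) + 1) := by
      rw [hc, hvβ]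
      field_simp
      ring
    have h2 : (s/n) * L ≤ s / n * ((β : ℝ) / 2 + L) := by
      have : (0:ℝ) ≤ s/n := by positivity
      nlinarith [hβ0.le]
    rw [hR]
    linarith
  have hsub : Sᶜ ⊆ Ap ∪ Am := by
    intro D hD
    by_contra hcon
    rw [Set.mem_union] at hcon
    push_neg at hcon
    obtain ⟨h1, h2⟩ := hcon
    rw [hAp, Set.mem_setOf_eq, not_le] at h1
    rw [hAm, Set.mem_setOf_eq, not_le] at h2
    apply hD
    rw [hS, Set.mem_setOf_eq, abs_le]
    have hsn : (0:ℝ) < s/n := by positivity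
    constructor
    · -- lower bound : m - R ≤ est
      have := mul_lt_mul_of_pos_left h2 hsn
      rw [mul_comm] at this
      have key : -((s/n) * ∑ i, gfun s v (D i)) < -m + s*c*τ + (s/n)*L := by
        calc -((s/n) * ∑ i, gfun s v (D i)) = ((-1:ℝ) * ∑ i, gfun s v (D i)) * (s/n) := by ring
          _ < ((n:ℝ)*(((-1:ℝ)/s) * m + c * τ) + L) * (s/n) := by
              apply mul_lt_mul_of_pos_right h2 hsn
          _ = -m + s*c*τ + (s/n)*L := by field_simp
      linarith
    · have key : (s/n) * ∑ i, gfun s v (D i) < m + s*c*τ + (s/n)*L := by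
        calc (s/n) * ∑ i, gfun s v (D i) = ((1:ℝ) * ∑ i, gfun s v (D i)) * (s/n) := by ring
          _ < ((n:ℝ)*(((1:ℝ)/s) * m + c * τ) + L) * (s/n) := by
              apply mul_lt_mul_of_pos_right h1 hsn
          _ = m + s*c*τ + (s/n)*L := by field_simp
      linarith
  have hSmeas : MeasurableSet S := by
    have hcont : Continuous (fun D : Fin n → ℝ => |(s / n) * ∑ i, gfun s v (D i) - m|) := by
      apply Continuous.abs
      apply Continuous.sub _ continuous_const
      exact continuous_const.mul
        (continuous_finset_sum _ (fun i _ => gfun_continuous.comp (continuous_apply i)))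
    exact hcont.measurable measurableSet_Iic
  have hcompl : P Sᶜ ≤ ENNReal.ofReal (2*ζ) := by
    calc P Sᶜ ≤ P (Ap ∪ Am) := measure_mono hsub
      _ ≤ P Ap + P Am := measure_union_le _ _
      _ ≤ ENNReal.ofReal ζ + ENNReal.ofReal ζ := add_le_add hA1 hA2
      _ = ENNReal.ofReal (2*ζ) := by
          rw [← ENNReal.ofReal_add hζ0.le hζ0.le]
          congr 1
          ring
  have hPS : P S = 1 - P Sᶜ := by
    have := prob_compl_eq_one_sub (μ := P) hSmeas.compl
    rwa [compl_compl] at this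
  have hfinal : ENNReal.ofReal (1 - 2*ζ) ≤ 1 - ENNReal.ofReal (2*ζ) := by
    rcases le_or_gt (1 - 2*ζ) 0 with h | h
    · rw [ENNReal.ofReal_of_nonpos h]
      exact zero_le
    · apply ENNReal.le_sub_of_add_le_right ENNReal.ofReal_ne_top
      rw [← ENNReal.ofReal_add h.le (by positivity)]
      rw [show (1 - 2*ζ) + 2*ζ = 1 by ring, ENNReal.ofReal_one]
  calc ENNReal.ofReal (1 - 2*ζ) ≤ 1 - ENNReal.ofReal (2*ζ) := hfinal
    _ ≤ 1 - P Sᶜ := tsub_le_tsub_left hcompl 1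
    _ = P S := hPS.symm

/-- High-probability guarantee for the Catoni-type mean estimator: for `n` i.i.d.
samples from `μ` with second moment at most `τ`, with probability at least `1 − 2ζ`
the estimator is within `τ/(2s)·(1/β + 1) + (s/n)·(β/2 + log(1/ζ))` of the mean. -/
theorem catoni_estimator_high_probability (n : ℕ) (hn : 0 < n) (s τ ζ : ℝ) (β : NNReal)
    (hs : 0 < s) (hβ : 0 < β) (hζ0 : 0 < ζ) (hζ1 : ζ < 1)
    (μ : Measure ℝ) [IsProbabilityMeasure μ]
    (hX1 : Integrable (fun x => x) μ)
    (hX2 : Integrable (fun x => x ^ 2) μ)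
    (hτ : (∫ x, x ^ 2 ∂μ) ≤ τ) :
    ENNReal.ofReal (1 - 2 * ζ) ≤
      (Measure.pi fun _ : Fin n => μ)
        {D | |catoniEst n s β D - ∫ x, x ∂μ| ≤
          τ / (2 * s) * (1 / (β : ℝ) + 1) + s / n * ((β : ℝ) / 2 + Real.log (1 / ζ))} := by
  exact catoni_main n hn s τ ζ β hs hβ hζ0 hζ1 μ hX1 hX2 hτ
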